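/- Let n and k be even integers with 4 ≤ k ≤ n−2, and let c_min and c_max denote the smallest and largest eigenvalues of the real symmetric matrix (C_{n,k} + C_{n,k}ᵀ)/2. If (n−k+c_min)·(n−k+c_max) ≥ (k/4)·(n−2)·c_max and (n−k+c_min)² ≥ −(k/4)·(n−2)·c_min, then every eigenvalue c of (C_{n,k} + C_{n,k}ᵀ)/2 satisfies (n−k+c_min)·(n−k+c) ≥ ((n−2)·k/4)·|c|. -/
import Mathlib


open Matrix Finset

/-- The `m × m` cyclic permutation matrix `P` (indexed by `ℤ/mℤ`):
`P_{ij} = 1` iff `j = i + 1 (mod m)`. -/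
noncomputable def cycP (m : ℕ) [NeZero m] : Matrix (ZMod m) (ZMod m) ℝ :=
  Matrix.of fun i j => if j = i + 1 then 1 else 0

/-- `C_{n,k} = Σ_{i=1}^{k/2} Pⁱ`. -/
noncomputable def matC (k m : ℕ) [NeZero m] : Matrix (ZMod m) (ZMod m) ℝ :=
  ∑ i ∈ Finset.Icc 1 (k / 2), cycP m ^ i

/-- `c` is an eigenvalue of the real matrix `M`. -/
def IsEigenvalue {m : ℕ} [NeZero m] (M : Matrix (ZMod m) (ZMod m) ℝ) (c : ℝ) : Prop :=
  ∃ x : ZMod m → ℝ, x ≠ 0 ∧ M *ᵥ x = c • x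

lemma cycP_pow (m : ℕ) [NeZero m] (i : ℕ) :
    cycP m ^ i = Matrix.of fun a b => if b = a + (i : ZMod m) then 1 else 0 := by
  induction i with
  | zero => ext a b; simp [Matrix.one_apply, eq_comm]
  | succ i ih =>
      ext a b
      rw [pow_succ, ih]
      simp only [Matrix.mul_apply, cycP, Matrix.of_apply]
      push_cast
      rw [Finset.sum_eq_single (a + i)]
      · simp [add_assoc]
      · intro c _ hc; simp [hc]
      · simp

lemma matC_ones (k m : ℕ) [NeZero m] :
    matC k m *ᵥ (fun _ => (1:ℝ)) = ((k/2 : ℕ) : ℝ) • (fun _ => (1:ℝ)) := by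
  funext a
  simp only [matC, Matrix.mulVec, dotProduct, Finset.sum_apply, Matrix.sum_apply,
    cycP_pow, Matrix.of_apply, mul_one, Pi.smul_apply, smul_eq_mul]
  rw [Finset.sum_comm]
  simp [Finset.sum_ite_eq' Finset.univ]

lemma matCT_ones (k m : ℕ) [NeZero m] :
    (matC k m)ᵀ *ᵥ (fun _ => (1:ℝ)) = ((k/2 : ℕ) : ℝ) • (fun _ => (1:ℝ)) := by
  funext a
  simp only [matC, Matrix.mulVec, dotProduct, Matrix.transpose_apply,
    Finset.sum_apply, Matrix.sum_apply, cycP_pow, Matrix.of_apply, mul_one,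
    Pi.smul_apply, smul_eq_mul]
  rw [Finset.sum_comm]
  have : ∀ i : ℕ, (∑ j : ZMod m, if a = j + (i : ZMod m) then (1:ℝ) else 0) = 1 := by
    intro i
    rw [Finset.sum_eq_single (a - (i : ZMod m))]
    · simp
    · intro c _ hc
      rw [if_neg]
      intro h; exact hc (by rw [h]; ring)
    · simp
  simp [this]

lemma halfk_eigen (k m : ℕ) [NeZero m] :
    ∃ x : ZMod m → ℝ, x ≠ 0 ∧
      ((1 / 2 : ℝ) • (matC k m + (matC k m)ᵀ)) *ᵥ x = ((k/2 : ℕ) : ℝ) • x := by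
  refine ⟨fun _ => 1, ?_, ?_⟩
  · intro h
    have := congrFun h (0 : ZMod m)
    simp at this
  · rw [Matrix.smul_mulVec, Matrix.add_mulVec, matC_ones, matCT_ones]
    funext j
    simp
    ring

/-- under the two spectral conditions, every eigenvalue `c` of
`(C_{n,k}+C_{n,k}ᵀ)/2` satisfies `(n−k+c_min)(n−k+c) ≥ ((n−2)k/4)·|c|`. -/
theorem statement10 (n k m : ℕ) [NeZero m] (hm : n = 2 * m)
    (hne : Even n) (hke : Even k) (hk4 : 4 ≤ k) (hkn : k ≤ n - 2)
    (cmin cmax : ℝ)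
    (hmin : IsLeast {c : ℝ |
      IsEigenvalue ((1 / 2 : ℝ) • (matC k m + (matC k m)ᵀ)) c} cmin)
    (hmax : IsGreatest {c : ℝ |
      IsEigenvalue ((1 / 2 : ℝ) • (matC k m + (matC k m)ᵀ)) c} cmax)
    (h1 : ((n : ℝ) - k + cmin) * ((n : ℝ) - k + cmax) ≥ ((k : ℝ) / 4) * ((n : ℝ) - 2) * cmax)
    (h2 : ((n : ℝ) - k + cmin) ^ 2 ≥ -(((k : ℝ) / 4) * ((n : ℝ) - 2) * cmin)) :
    ∀ c : ℝ, IsEigenvalue ((1 / 2 : ℝ) • (matC k m + (matC k m)ᵀ)) c →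
      ((n : ℝ) - k + cmin) * ((n : ℝ) - k + c) ≥ ((n : ℝ) - 2) * k / 4 * |c| := by
  have hnk : (k : ℝ) + 2 ≤ n := by
    have : k + 2 ≤ n := by omega
    exact_mod_cast this
  have hk4' : (4 : ℝ) ≤ k := by exact_mod_cast hk4
  -- cmax ≥ k/2 ≥ 2
  have hcmax : (2 : ℝ) ≤ cmax := by
    have h := hmax.2 (halfk_eigen k m)
    have : (2 : ℝ) ≤ ((k / 2 : ℕ) : ℝ) := by
      have : 2 ≤ k / 2 := by omega
      exact_mod_cast this
    linarith
  -- B > 0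
  have hB : (0 : ℝ) < ((n : ℝ) - 2) * k / 4 := by nlinarith
  -- A > 0
  have hA : (0 : ℝ) < (n : ℝ) - k + cmin := by nlinarith
  intro c hc
  have hcu : c ≤ cmax := hmax.2 hc
  have hcl : cmin ≤ c := hmin.2 hc
  rcases le_or_gt 0 c with hc0 | hc0
  · rw [abs_of_nonneg hc0]
    rcases le_or_gt (((n : ℝ) - 2) * k / 4) ((n : ℝ) - k + cmin) with hAB | hAB
    · nlinarith [mul_nonneg (sub_nonneg.2 hAB) hc0, mul_nonneg hA.le (by linarith : (0:ℝ) ≤ (n:ℝ) - k)]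
    · nlinarith [mul_nonneg (sub_nonneg.2 hAB.le) (sub_nonneg.2 hcu)]
  · rw [abs_of_neg hc0]
    nlinarith [mul_nonneg (by linarith : (0:ℝ) ≤ ((n:ℝ) - k + cmin) + ((n:ℝ)-2)*k/4)
      (sub_nonneg.2 hcl)]
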